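/- arXiv:2603.24305 — 7 statements merged into one kernel-verified Lean document; each statement's English description precedes it below -/
import Mathlib

section
/- Let G be a connected chordal graph, K a clique in G, C a connected component of G − K, and S = N(C) the set of vertices of K with a neighbour in C. Then for every vertex v ∈ C whose set of neighbours in S is a proper subset of S, there exists a vertex w ∈ C such that the neighbours of v in S form a proper subset of the neighbours of w in S. -/
/-! Every vertex of `S` lies in the clique `K`, so each `t ∈ S` adjacent to `v` is also adjacent
to a vertex `s ∈ S` that `v` misses. A shortest `v`–`s` path through `C` is induced, and in a
chordal graph a vertex adjacent to both ends of an induced path avoiding it is adjacent to all of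
it: otherwise the part of the path between two consecutive neighbours closes an induced cycle of
length at least four. Hence `t` is adjacent to the last vertex `w ∈ C` of the path, and so is `s`.
-/

open SimpleGraph

variable {V W : Type*}

/-- `G` contains no induced cycle of length at least four. -/
def IsChordal (G : SimpleGraph V) : Prop :=
  ∀ (n : ℕ), 4 ≤ n → ∀ f : ZMod n → V, Function.Injective f →
    (∀ i j : ZMod n, G.Adj (f i) (f j) ↔ j = i + 1 ∨ i = j + 1) → False

/-- The set of vertices outside `C` having a neighbour in `C`. -/
def nbhdSet (G : SimpleGraph V) (C : Set V) : Set V :=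
  {v | v ∉ C ∧ ∃ u ∈ C, G.Adj u v}

/-- `C` is a connected component of `G - S`. -/
def IsCompOutside (G : SimpleGraph V) (S C : Set V) : Prop :=
  C.Nonempty ∧ Disjoint C S ∧ (G.induce C).Connected ∧
    ∀ u ∈ C, ∀ v, G.Adj u v → v ∉ S → v ∈ C

/-- A strict comb of cliques. -/
def HasStrictCombOfCliques (G : SimpleGraph V) : Prop :=
  ∃ v : ℕ → V, Function.Injective v ∧ (∀ i j, i ≠ j → G.Adj (v i) (v j)) ∧
    ∀ i : ℕ, 0 < i → ∃ w, (∀ j, j < i → G.Adj w (v j)) ∧ (∀ j, i ≤ j → ¬ G.Adj w (v j))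

/-- Every walk from `A` to `B` meets `S`. -/
def Separates (G : SimpleGraph V) (A B S : Set V) : Prop :=
  ∀ a ∈ A, ∀ b ∈ B, ∀ p : G.Walk a b, ∃ x ∈ p.support, x ∈ S

/-- `S` is a minimal `A`–`B` separator. -/
def IsMinimalSeparator (G : SimpleGraph V) (A B S : Set V) : Prop :=
  Separates G A B S ∧ ∀ S' ⊆ S, Separates G A B S' → S' = S

/-- `S` is a minimal `a`–`b` separator (containing neither `a` nor `b`). -/
def IsMinimalVxSeparator (G : SimpleGraph V) (a b : V) (S : Set V) : Prop :=
  a ∉ S ∧ b ∉ S ∧ Separates G {a} {b} S ∧ ∀ S' ⊆ S, Separates G {a} {b} S' → S' = S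

/-- A tree-decomposition of `G` with decomposition tree `T` and bags `bag`. -/
def IsTreeDecomp {ι : Type*} (G : SimpleGraph V) (T : SimpleGraph ι) (bag : ι → Set V) : Prop :=
  T.IsTree ∧ (∀ v, ∃ t, v ∈ bag t) ∧
    (∀ u v, G.Adj u v → ∃ t, u ∈ bag t ∧ v ∈ bag t) ∧
    ∀ v, (T.induce {t | v ∈ bag t}).Connected

/-- `H` is an induced minor of `G`. -/
def IsInducedMinor (H : SimpleGraph W) (G : SimpleGraph V) : Prop :=
  ∃ B : W → Set V, (∀ w, (B w).Nonempty) ∧ (∀ w, (G.induce (B w)).Connected) ∧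
    (Pairwise fun u w => Disjoint (B u) (B w)) ∧
    ∀ u w, u ≠ w → ((∃ x ∈ B u, ∃ y ∈ B w, G.Adj x y) ↔ H.Adj u w)

/-- The graph `𝓗`: a countably infinite clique together with two non-adjacent
dominating vertices. -/
def HGraph : SimpleGraph (ℕ ⊕ Bool) where
  Adj x y := match x, y with
    | .inl i, .inl j => i ≠ j
    | .inl _, .inr _ => True
    | .inr _, .inl _ => True
    | .inr _, .inr _ => False
  symm := by
    constructor
    rintro (i | a) (j | b) h <;> simp_all
    exact fun h' => h h'.symm
  loopless := by
    constructor
    rintro (i | a) h <;> simp_all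

/-- `u` lies on the path from `r` to `v` in the tree `T`; this is the tree-order. -/
def TreeLE (T : SimpleGraph V) (r u v : V) : Prop :=
  ∀ p : T.Walk r v, p.IsPath → u ∈ p.support

/-- `T` is a normal spanning tree of `G` with root `r`. -/
def IsNormalSpanningTree (G T : SimpleGraph V) (r : V) : Prop :=
  T ≤ G ∧ T.IsTree ∧ ∀ u v, G.Adj u v → TreeLE T r u v ∨ TreeLE T r v u

lemma ZMod.eq_add_one_iff_val {n : ℕ} [NeZero n] (a b : ZMod n) :
    b = a + 1 ↔ b.val = a.val + 1 ∨ (b.val = 0 ∧ a.val + 1 = n) := by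
  have hcast : a + 1 = ((a.val + 1 : ℕ) : ZMod n) := by simp
  rw [hcast, ← (ZMod.val_injective n).eq_iff, ZMod.val_natCast]
  have := ZMod.val_lt a
  have := ZMod.val_lt b
  rcases Nat.lt_or_ge (a.val + 1) n with h | h
  · rw [Nat.mod_eq_of_lt h]; omega
  · rw [show a.val + 1 = n by omega, Nat.mod_self]; omega

structure IsInducedPath (G : SimpleGraph V) (y : ℕ → V) (m : ℕ) : Prop where
  injOn : Set.InjOn y (Set.Iic m)
  adj_iff : ∀ i ≤ m, ∀ j ≤ m, G.Adj (y i) (y j) ↔ j = i + 1 ∨ i = j + 1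

namespace IsInducedPath

variable {G : SimpleGraph V} {y : ℕ → V} {m : ℕ}

lemma of_le (hy : IsInducedPath G y m) {k : ℕ} (hk : k ≤ m) : IsInducedPath G y k where
  injOn := hy.injOn.mono (Set.Iic_subset_Iic.mpr hk)
  adj_iff i hi j hj := hy.adj_iff i (hi.trans hk) j (hj.trans hk)

lemma shift (hy : IsInducedPath G y m) {k : ℕ} (hk : k ≤ m) :
    IsInducedPath G (fun i => y (k + i)) (m - k) where
  injOn i hi j hj h := by
    rw [Set.mem_Iic] at hi hj
    have := hy.injOn (Set.mem_Iic.2 (show k + i ≤ m by omega))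
      (Set.mem_Iic.2 (show k + j ≤ m by omega)) h
    omega
  adj_iff i hi j hj := by rw [hy.adj_iff _ (by omega) _ (by omega)]; omega

lemma map {H : SimpleGraph W} (f : G ↪g H) (hy : IsInducedPath G y m) :
    IsInducedPath H (f ∘ y) m where
  injOn := f.injective.injOn.comp hy.injOn (Set.mapsTo_univ _ _)
  adj_iff i hi j hj := by simpa using hy.adj_iff i hi j hj

end IsInducedPath

lemma SimpleGraph.Walk.isInducedPath_getVert {G : SimpleGraph V} {a b : V} (p : G.Walk a b)
    (hp : p.length = G.dist a b) : IsInducedPath G p.getVert p.length where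
  injOn := (p.isPath_of_length_eq_dist hp).getVert_injOn
  adj_iff i hi j hj := by
    constructor
    · intro hadj
      by_contra hfar
      obtain rfl | hne := eq_or_ne i j
      · exact G.irrefl hadj
      wlog hij : i < j generalizing i j
      · exact this j hj i hi hadj.symm (by omega) hne.symm (by omega)
      have hshort := G.dist_le ((p.take i).append (.cons hadj (p.drop j)))
      simp only [Walk.length_append, Walk.take_length, Walk.length_cons, Walk.drop_length] at hshort
      omega
    · rintro (rfl | rfl)
      · exact p.adj_getVert_succ (by omega)
      · exact (p.adj_getVert_succ (by omega)).symm

namespace IsChordal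

variable {G : SimpleGraph V} {y : ℕ → V} {m : ℕ} {t : V}

lemma exists_adj_interior (hG : IsChordal G) (hy : IsInducedPath G y m) (hm : 2 ≤ m)
    (ht : ∀ i ≤ m, y i ≠ t) (h0 : G.Adj t (y 0)) (hm' : G.Adj t (y m)) :
    ∃ i, 0 < i ∧ i < m ∧ G.Adj t (y i) := by
  by_contra! hnone
  have htadj : ∀ i ≤ m, G.Adj t (y i) ↔ i = 0 ∨ i = m := fun i hi =>
    ⟨fun h => by by_contra!; exact hnone i (by omega) (by omega) h,
      by rintro (rfl | rfl) <;> assumption⟩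
  have : NeZero (m + 2) := ⟨by omega⟩
  refine hG (m + 2) (by omega) (fun i => if i.val ≤ m then y i.val else t) ?_ ?_
  · intro i j hij
    apply ZMod.val_injective
    have := ZMod.val_lt i
    have := ZMod.val_lt j
    dsimp only at hij
    split_ifs at hij with hi hj hj
    · exact hy.injOn (Set.mem_Iic.2 hi) (Set.mem_Iic.2 hj) hij
    · exact absurd hij (ht _ hi)
    · exact absurd hij.symm (ht _ hj)
    · omega
  · intro i j
    have := ZMod.val_lt i
    have := ZMod.val_lt j
    rw [ZMod.eq_add_one_iff_val, ZMod.eq_add_one_iff_val]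
    split_ifs with hi hj hj
    · rw [hy.adj_iff _ hi _ hj]; omega
    · rw [G.adj_comm, htadj _ hi]; omega
    · rw [htadj _ hj]; omega
    · simp only [G.irrefl, false_iff]; omega

lemma adj_of_adj_ends (hG : IsChordal G) (hy : IsInducedPath G y m) (ht : ∀ i ≤ m, y i ≠ t)
    (h0 : G.Adj t (y 0)) (hm : G.Adj t (y m)) : ∀ i ≤ m, G.Adj t (y i) := by
  induction m using Nat.strong_induction_on generalizing y with
  | _ m ih =>
  intro i hi
  rcases Nat.lt_or_ge m 2 with hm2 | hm2
  · interval_cases m <;> interval_cases i <;> assumption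
  obtain ⟨k, hk0, hkm, hk⟩ := hG.exists_adj_interior hy hm2 ht h0 hm
  rcases le_total i k with hik | hki
  · exact ih k hkm (hy.of_le hkm.le) (fun j hj => ht j (by omega)) h0 hk i hik
  · have := ih (m - k) (by omega) (hy.shift hkm.le) (fun j hj => ht _ (by omega))
      (by simpa using hk) (by simpa [Nat.add_sub_cancel' hkm.le] using hm) (i - k) (by omega)
    simpa [Nat.add_sub_cancel' hki] using this

lemma exists_mem_adj_and_forall_adj (hG : IsChordal G) {C : Set V}
    (hC : (G.induce C).Preconnected) {v u s : V} (hv : v ∈ C) (hu : u ∈ C) (hs : s ∉ C)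
    (hus : G.Adj u s) :
    ∃ w ∈ C, G.Adj w s ∧ ∀ t ∉ C, G.Adj v t → G.Adj t s → G.Adj w t := by
  have hconn : (G.induce (C ∪ {s})).Connected :=
    connected_induce_union hC (fun a b => Subsingleton.elim a b ▸ .refl a) hu rfl hus
  obtain ⟨p, hp⟩ := hconn.exists_walk_length_eq_dist ⟨v, .inl hv⟩ ⟨s, .inr rfl⟩
  have hy := (p.isInducedPath_getVert hp).map (Embedding.induce _)
  have hv' : (p.getVert 0 : V) = v := by simp
  have hs' : (p.getVert p.length : V) = s := by simp
  obtain ⟨k, hk⟩ : ∃ k, p.length = k + 1 :=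
    Nat.exists_eq_add_one.mpr <| Nat.pos_of_ne_zero fun h => hs <| by
      rw [h] at hs'
      rw [← hs', hv']
      exact hv
  have hws : G.Adj (p.getVert k) s := by
    have h := p.adj_getVert_succ (show k < p.length by omega)
    rw [← hk] at h
    simpa [hs'] using h
  refine ⟨p.getVert k, (p.getVert k).2.resolve_right hws.ne, hws, fun t htC hvt hts => ?_⟩
  refine (hG.adj_of_adj_ends hy (fun i _ hit => ?_) (by simpa [hv'] using hvt.symm)
    (by simpa [hs'] using hts) k (by omega)).symm
  rcases (p.getVert i).2 with h | h
  · exact htC (hit ▸ h)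
  · exact hts.ne (hit ▸ h)

end IsChordal

lemma IsCompOutside.nbhdSet_subset {G : SimpleGraph V} {K C : Set V} (hC : IsCompOutside G K C) :
    nbhdSet G C ⊆ K :=
  fun x ⟨hxC, u, hu, hux⟩ => by_contra fun hxK => hxC (hC.2.2.2 u hu x hux hxK)

universe u

theorem stmt0_general {V : Type u} (G : SimpleGraph V)
    (hchordal : IsChordal G) (K : Set V) (hK : G.IsClique K)
    (C : Set V) (hC : IsCompOutside G K C) (S : Set V) (hS : S = nbhdSet G C)
    (v : V) (hv : v ∈ C) (hprop : {s ∈ S | G.Adj v s} ⊂ S) :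
    ∃ w ∈ C, {s ∈ S | G.Adj v s} ⊂ {s ∈ S | G.Adj w s} := by
  subst hS
  obtain ⟨s, hs, hvs⟩ := Set.exists_of_ssubset hprop
  obtain ⟨hsC, u, hu, hus⟩ := id hs
  obtain ⟨w, hw, hws, hdom⟩ :=
    hchordal.exists_mem_adj_and_forall_adj hC.2.2.1.preconnected hv hu hsC hus
  refine ⟨w, hw, (Set.ssubset_iff_of_subset ?_).2 ⟨s, ⟨hs, hws⟩, hvs⟩⟩
  rintro t ⟨ht, hvt⟩
  have hts : t ≠ s := by rintro rfl; exact hvs ⟨ht, hvt⟩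
  exact ⟨ht, hdom t ht.1 hvt (hK (hC.nbhdSet_subset ht) (hC.nbhdSet_subset hs) hts)⟩

theorem stmt0 {V : Type u} (G : SimpleGraph V) (hconn : G.Connected)
    (hchordal : IsChordal G) (K : Set V) (hK : G.IsClique K)
    (C : Set V) (hC : IsCompOutside G K C) (S : Set V) (hS : S = nbhdSet G C)
    (v : V) (hv : v ∈ C) (hprop : {s ∈ S | G.Adj v s} ⊂ S) :
    ∃ w ∈ C, {s ∈ S | G.Adj v s} ⊂ {s ∈ S | G.Adj w s} :=
  stmt0_general G hchordal K hK C hC S hS v hv hprop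
end

section
/- Every chordal graph containing no strict comb of cliques admits a tree-decomposition all of whose parts are maximal cliques. -/
open SimpleGraph

variable {V W : Type*}

universe u

/-!
The decomposition is built top-down. The root bag is any maximal clique. The children of a node
with part `C` and bag `R` (the root has part `univ`) are the components `D` of `C \ R`. The
neighbourhood `N(D)` lies in `R`, so it is a clique, and the bag of `D` is a maximal clique that
contains `N(D)` and meets `D`. It exists because some vertex of `D` is adjacent to all of `N(D)`:
along a shortest path, chordality lets a vertex of `D` gain any missed neighbour in `N(D)` while
keeping the others, and if this never ended, the missed vertices would span a strict comb.

Every vertex `v` lies in some bag. Otherwise `v` lies in the parts `C 0 ⊇ C 1 ⊇ ⋯` of an infinite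
branch. If the component `W` of `v` in `⋂ k, C k` has no neighbour in some `C T`, then
`C T ⊆ W ⊆ C (T + 1)` misses the bag of `C T`, which it should meet. Otherwise the neighbours of
`W` leave the parts one after another and, once outside, lie in every later bag; together with
vertices of these bags that have no neighbour in the following part they form a strict comb.

If the bag of a node contains `v` but its part does not, then `v` is a neighbour of the part and
lies in the bag of the parent as well. So the nodes whose bags contain `v` form a subtree, rooted
where `v` first enters a bag on its branch.
-/

namespace SimpleGraph

variable {G H : SimpleGraph V} {X : Set V} {u v w : V}

lemma spanningCoe_induce_adj :
    (G.induce X).spanningCoe.Adj u v ↔ G.Adj u v ∧ u ∈ X ∧ v ∈ X := by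
  simp

lemma Reachable.mem_of_forall_adj {W : Set V} (hW : ∀ a ∈ W, ∀ b, H.Adj a b → b ∈ W)
    (h : H.Reachable u v) (hu : u ∈ W) : v ∈ W := by
  obtain ⟨p⟩ := h
  induction p with
  | nil => exact hu
  | cons hadj _ ih => exact ih (hW _ hu _ hadj)

variable (G) in
def connectedComponentIn (X : Set V) (v : V) : Set V :=
  {w | w ∈ X ∧ (G.induce X).spanningCoe.Reachable v w}

lemma connectedComponentIn_subset : G.connectedComponentIn X v ⊆ X := fun _ h => h.1

lemma mem_connectedComponentIn (hv : v ∈ X) : v ∈ G.connectedComponentIn X v := ⟨hv, .rfl⟩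

lemma mem_connectedComponentIn_of_adj (hw : w ∈ G.connectedComponentIn X v) (hadj : G.Adj w u)
    (hu : u ∈ X) : u ∈ G.connectedComponentIn X v :=
  ⟨hu, hw.2.trans (spanningCoe_induce_adj.2 ⟨hadj, hw.1, hu⟩).reachable⟩

lemma connectedComponentIn_eq (hu : u ∈ G.connectedComponentIn X v) :
    G.connectedComponentIn X u = G.connectedComponentIn X v :=
  Set.ext fun _ => ⟨fun h => ⟨h.1, hu.2.trans h.2⟩, fun h => ⟨h.1, hu.2.symm.trans h.2⟩⟩

lemma preconnected_induce_connectedComponentIn :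
    (G.induce (G.connectedComponentIn X v)).Preconnected := by
  rintro ⟨a, ha⟩ ⟨b, hb⟩
  have hab := ha.2.symm.trans hb.2
  rw [reachable_iff_reflTransGen] at hab
  induction hab with
  | refl => rfl
  | tail hac hcb ih =>
    obtain ⟨hcb, hc, -⟩ := spanningCoe_induce_adj.1 hcb
    have hc' : _ ∈ G.connectedComponentIn X v :=
      ⟨hc, ha.2.trans ((reachable_iff_reflTransGen _ _).2 hac)⟩
    exact (ih hc').trans (induce_adj.2 hcb).reachable

lemma IsClique.exists_maximal_superset {s : Set V} (hs : G.IsClique s) :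
    ∃ R, s ⊆ R ∧ Maximal G.IsClique R :=
  Order.IsOfFiniteCharacter.exists_maximal (F := {t | G.IsClique t}) (fun t =>
    ⟨fun ht _ hyt _ => ht.subset hyt, fun h a ha b hb hab =>
      h {a, b} (Set.insert_subset_iff.2 ⟨ha, Set.singleton_subset_iff.2 hb⟩) (Set.toFinite _)
        (by simp) (by simp) hab⟩) hs

lemma exists_not_adj_of_maximal_isClique {R : Set V} (hR : Maximal G.IsClique R) (hv : v ∉ R) :
    ∃ x ∈ R, ¬ G.Adj v x := by
  by_contra! h
  exact hv (hR.2 (isClique_insert.2 ⟨hR.1, fun x hx _ => h x hx⟩) (Set.subset_insert v R)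
    (Set.mem_insert v R))

lemma isAcyclic_of_rank {α β : Type*} [LinearOrder β] {T : SimpleGraph α} (f : α → β)
    (hne : ∀ a b, T.Adj a b → f a ≠ f b)
    (huniq : ∀ a b b', T.Adj a b → T.Adj a b' → f b < f a → f b' < f a → b = b') :
    T.IsAcyclic := by
  classical
  -- a vertex of maximal rank on a cycle would have two distinct lower neighbours
  intro u c hc
  obtain ⟨w, hw, hmax⟩ := c.support.toFinset.exists_max_image f ⟨u, by simp⟩
  rw [List.mem_toFinset] at hw
  have hc' := hc.rotate hw
  have hlt : ∀ x ∈ (c.rotate w hw).support, T.Adj w x → f x < f w := fun x hx hadj =>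
    (hmax x (by simpa using hx)).lt_of_ne (hne _ _ hadj).symm
  have hsnd := Walk.adj_snd hc'.not_nil
  have hpen := (Walk.adj_penultimate hc'.not_nil).symm
  exact hc'.snd_ne_penultimate (huniq w _ _ hsnd hpen
    (hlt _ (Walk.getVert_mem_support _ 1) hsnd) (hlt _ (Walk.getVert_mem_support _ _) hpen))

end SimpleGraph

open SimpleGraph

section

variable {G : SimpleGraph V} {C R : Set V} {c s v : V}

theorem IsChordal.false_of_cycle (hG : IsChordal G) {k : ℕ} (hk : 3 ≤ k) (p : ℕ → V)
    (hinj : Set.InjOn p (Set.Iic k))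
    (hadj : ∀ a ≤ k, ∀ b ≤ k,
      G.Adj (p a) (p b) ↔ b = a + 1 ∨ a = b + 1 ∨ (a = k ∧ b = 0) ∨ (a = 0 ∧ b = k)) :
    False := by
  have hsucc (i j : Fin (k + 1)) : j = i + 1 ↔ j.val = i.val + 1 ∨ (i.val = k ∧ j.val = 0) := by
    rw [Fin.ext_iff, Fin.val_add_one]
    split_ifs with h <;> simp only [Fin.ext_iff, Fin.val_last] at h <;> omega
  refine hG (k + 1) (by omega) (fun i : Fin (k + 1) => p i.val)
    (fun i j h => Fin.ext (hinj (Fin.is_le i) (Fin.is_le j) h)) fun i j => ?_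
  rw [hadj _ (Fin.is_le i) _ (Fin.is_le j)]
  refine Iff.trans ?_ (or_congr (hsucc i j) (hsucc j i)).symm
  omega

theorem IsChordal.false_of_chordless_path (hG : IsChordal G) {m : ℕ} {x : ℕ → V} {t s : V}
    (hm : 0 < m) (hinj : Set.InjOn x (Set.Iic m))
    (hx : ∀ i ≤ m, ∀ j ≤ m, G.Adj (x i) (x j) ↔ j = i + 1 ∨ i = j + 1)
    (htx : ∀ i ≤ m, t ≠ x i) (hsx : ∀ i ≤ m, s ≠ x i) (hts : G.Adj t s)
    (ht : ∀ i ≤ m, G.Adj t (x i) ↔ i = 0) (hs : ∀ i ≤ m, G.Adj s (x i) ↔ i = m) : False := by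
  set k := m + 2
  set p : ℕ → V := fun a => if a = 0 then t else if a = k then s else x (a - 1)
  have hp0 : p 0 = t := if_pos rfl
  have hpk : p k = s := by simp only [p, if_neg (show k ≠ 0 by omega), if_true]
  have hpx : ∀ a, 0 < a → a < k → p a = x (a - 1) := fun a h0 hk => by
    simp only [p, if_neg (show a ≠ 0 by omega), if_neg (show a ≠ k by omega)]
  refine hG.false_of_cycle (k := k) (by omega) p ?_ ?_
  · intro a ha b hb hab
    wlog hle : a ≤ b generalizing a b
    · exact (this hb ha hab.symm (by omega)).symm
    simp only [Set.mem_Iic] at ha hb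
    rcases (show a = 0 ∨ (0 < a ∧ a < k) ∨ a = k by omega) with rfl | ⟨ha0, hak⟩ | rfl <;>
      rcases (show b = 0 ∨ (0 < b ∧ b < k) ∨ b = k by omega) with rfl | ⟨hb0, hbk⟩ | rfl <;>
      first | rfl | omega | skip
    · exact absurd (hp0 ▸ hpx b hb0 hbk ▸ hab) (htx _ (by omega))
    · exact absurd (hp0 ▸ hpk ▸ hab) (G.ne_of_adj hts)
    · have := hinj (by simp only [Set.mem_Iic]; omega) (by simp only [Set.mem_Iic]; omega)
        (hpx a ha0 hak ▸ hpx b hb0 hbk ▸ hab)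
      omega
    · exact absurd (hpx a ha0 hak ▸ hpk ▸ hab).symm (hsx _ (by omega))
  · intro a ha b hb
    wlog hle : a ≤ b generalizing a b
    · rw [G.adj_comm, this b hb a ha (by omega)]
      omega
    rcases (show a = 0 ∨ (0 < a ∧ a < k) ∨ a = k by omega) with rfl | ⟨ha0, hak⟩ | rfl <;>
      rcases (show b = 0 ∨ (0 < b ∧ b < k) ∨ b = k by omega) with rfl | ⟨hb0, hbk⟩ | rfl <;>
      first | omega | exact iff_of_false (G.irrefl) (by omega) | skip
    · rw [hp0, hpx b hb0 hbk, ht _ (by omega)]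
      omega
    · rw [hp0, hpk]
      exact iff_of_true hts (by omega)
    · rw [hpx a ha0 hak, hpx b hb0 hbk, hx _ (by omega) _ (by omega)]
      omega
    · rw [hpx a ha0 hak, hpk, G.adj_comm, hs _ (by omega)]
      omega

theorem IsChordal.adj_of_path (hG : IsChordal G) {m : ℕ} {x : ℕ → V} {t s : V}
    (hinj : Set.InjOn x (Set.Iic m))
    (hx : ∀ i ≤ m, ∀ j ≤ m, G.Adj (x i) (x j) ↔ j = i + 1 ∨ i = j + 1)
    (htx : ∀ i ≤ m, t ≠ x i) (hsx : ∀ i ≤ m, s ≠ x i) (hts : G.Adj t s)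
    (ht : G.Adj t (x 0)) (hs : ∀ i ≤ m, G.Adj s (x i) ↔ i = m) : G.Adj t (x m) := by
  classical
  by_contra htm
  -- with `x j` the last neighbour of `t`, the path `t, x j, …, x m, s` is chordless
  set j := Nat.findGreatest (fun i => G.Adj t (x i)) m
  have hj : G.Adj t (x j) := Nat.findGreatest_spec (P := fun i => G.Adj t (x i)) (Nat.zero_le m) ht
  have hjm : j < m := (Nat.findGreatest_le m).lt_of_ne fun h => htm (h ▸ hj)
  have hlast : ∀ i, j < i → i ≤ m → ¬ G.Adj t (x i) := fun i => Nat.findGreatest_is_greatest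
  refine hG.false_of_chordless_path (m := m - j) (x := fun i => x (j + i)) (by omega) ?_ ?_
    (fun i _ => htx _ (by omega)) (fun i _ => hsx _ (by omega)) hts ?_ ?_
  · intro a ha b hb hab
    have := hinj (by simp only [Set.mem_Iic] at ha ⊢; omega)
      (by simp only [Set.mem_Iic] at hb ⊢; omega) hab
    omega
  · intro a _ b _
    rw [hx _ (by omega) _ (by omega)]
    omega
  · intro i hi
    rcases Nat.eq_zero_or_pos i with rfl | hi0
    · exact iff_of_true hj rfl
    · exact iff_of_false (hlast _ (by omega) (by omega)) (by omega)
  · intro i _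
    rw [hs _ (by omega)]
    omega

theorem IsChordal.exists_mem_adj_of_mem_nbhdSet (hG : IsChordal G) (hC : (G.induce C).Preconnected)
    (hS : G.IsClique (nbhdSet G C)) (hc : c ∈ C) (hs : s ∈ nbhdSet G C) :
    ∃ c' ∈ C, G.Adj c' s ∧ ∀ t ∈ nbhdSet G C, G.Adj c t → G.Adj c' t := by
  classical
  -- a shortest path `x 0 = c, …, x m` in `C` to a neighbour of `s` is induced
  set H := G.induce C
  have hex : ∃ m, ∃ w : C, G.Adj w s ∧ H.dist ⟨c, hc⟩ w = m := by
    obtain ⟨-, u, hu, hus⟩ := hs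
    exact ⟨_, ⟨u, hu⟩, hus, rfl⟩
  obtain ⟨w, hws, hw⟩ := Nat.find_spec hex
  set m := Nat.find hex
  obtain ⟨p, hp⟩ := (hC ⟨c, hc⟩ w).exists_walk_length_eq_dist
  have hdist : ∀ i ≤ m, H.dist ⟨c, hc⟩ (p.getVert i) = i := fun i hi => by
    rw [← length_eq_dist_of_subwalk hp (p.isSubwalk_take i), Walk.take_length]
    omega
  set x : ℕ → V := fun i => (p.getVert i).1
  have hxm : x m = w := by simp only [x, ← hw, ← hp, Walk.getVert_length]
  have hinj : Set.InjOn x (Set.Iic m) := fun i hi j hj h => by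
    rw [← hdist i hi, ← hdist j hj, Subtype.ext h]
  have hx : ∀ i ≤ m, ∀ j ≤ m, G.Adj (x i) (x j) ↔ j = i + 1 ∨ i = j + 1 := by
    intro i hi j hj
    refine ⟨fun h => ?_, ?_⟩
    · have hne : i ≠ j := fun hij => G.ne_of_adj h (congrArg x hij)
      have := (induce_adj.2 h : H.Adj (p.getVert i) (p.getVert j)).diff_dist_adj (u := ⟨c, hc⟩)
      rw [hdist i hi, hdist j hj] at this
      omega
    · rintro (rfl | rfl)
      · exact induce_adj.1 (p.adj_getVert_succ (by omega))
      · exact (induce_adj.1 (p.adj_getVert_succ (by omega))).symm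
  have hs' : ∀ i ≤ m, G.Adj s (x i) ↔ i = m := fun i hi =>
    ⟨fun h => by_contra fun him => Nat.find_min hex (lt_of_le_of_ne hi him)
      ⟨p.getVert i, h.symm, hdist i hi⟩, fun him => him ▸ hxm ▸ hws.symm⟩
  refine ⟨x m, (p.getVert m).2, hxm ▸ hws, fun t ht hct => ?_⟩
  obtain rfl | hts := eq_or_ne t s
  · exact hxm ▸ hws
  refine (hG.adj_of_path hinj hx (fun i _ (h : t = x i) => ht.1 (h ▸ (p.getVert i).2))
    (fun i _ (h : s = x i) => hs.1 (h ▸ (p.getVert i).2)) (hS ht hs hts) ?_ hs').symm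
  simpa [x] using hct.symm

theorem hasStrictCombOfCliques_of_adj_iff {S : Set V} (hS : G.IsClique S) {y z : ℕ → V}
    (hy : ∀ n, y n ∈ S) (hz : ∀ i j, G.Adj (z i) (y j) ↔ j ≤ i) : HasStrictCombOfCliques G := by
  have hinj : Function.Injective y := by
    intro i j hij
    by_contra hne
    wlog hlt : i < j generalizing i j
    · exact this hij.symm (Ne.symm hne) (by omega)
    exact absurd ((hz i j).1 (hij ▸ (hz i i).2 le_rfl)) (by omega)
  refine ⟨y, hinj, fun i j hij => hS (hy i) (hy j) (hinj.ne hij), fun i hi => ⟨z (i - 1), ?_, ?_⟩⟩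
  · exact fun j hj => (hz _ _).2 (by omega)
  · exact fun j hj h => absurd ((hz _ _).1 h) (by omega)

theorem IsChordal.exists_mem_forall_adj_nbhdSet (hG : IsChordal G)
    (hcomb : ¬ HasStrictCombOfCliques G) (hne : C.Nonempty) (hC : (G.induce C).Preconnected)
    (hS : G.IsClique (nbhdSet G C)) : ∃ c ∈ C, ∀ s ∈ nbhdSet G C, G.Adj c s := by
  by_contra! hmiss
  choose! miss hmissS hmiss using hmiss
  choose! next hnextC hnext hnext' using fun c (hc : c ∈ C) =>
    hG.exists_mem_adj_of_mem_nbhdSet hC hS hc (hmissS c hc)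
  obtain ⟨c₀, hc₀⟩ := hne
  -- iterating `next` yields the teeth of a comb whose spine is formed by the missed vertices
  set c : ℕ → V := fun n => next^[n] c₀
  have hc_succ : ∀ n, c (n + 1) = next (c n) := fun n => Function.iterate_succ_apply' next n c₀
  have hcC : ∀ n, c n ∈ C := by
    intro n
    induction n with
    | zero => exact hc₀
    | succ n ih => exact hc_succ n ▸ hnextC _ ih
  have hmono : ∀ {i j}, i ≤ j → ∀ s ∈ nbhdSet G C, G.Adj (c i) s → G.Adj (c j) s := by
    intro i j hij
    induction hij with
    | refl => exact fun _ _ h => h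
    | step _ ih => exact fun s hs h => hc_succ _ ▸ hnext' _ (hcC _) s hs (ih s hs h)
  refine hcomb (hasStrictCombOfCliques_of_adj_iff hS (y := fun n => miss (c n))
    (z := fun n => c (n + 1)) (fun n => hmissS _ (hcC n)) fun i j => ⟨fun h => ?_, fun h => ?_⟩)
  · by_contra! hij
    exact hmiss _ (hcC j) (hmono hij _ (hmissS _ (hcC j)) h)
  · exact hmono (by omega) _ (hmissS _ (hcC j)) (hc_succ j ▸ hnext _ (hcC j))

variable (G) in
structure IsAttachedClique (C R : Set V) : Prop where
  maximal : Maximal G.IsClique R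
  nbhdSet_subset : nbhdSet G C ⊆ R
  inter_nonempty : (R ∩ C).Nonempty

lemma IsAttachedClique.subset_union (h : IsAttachedClique G C R) : R ⊆ C ∪ nbhdSet G C := by
  intro x hx
  by_cases hxC : x ∈ C
  · exact Or.inl hxC
  obtain ⟨c, hcR, hcC⟩ := h.inter_nonempty
  exact Or.inr ⟨hxC, c, hcC, h.maximal.1 hcR hx fun hcx => hxC (hcx ▸ hcC)⟩

theorem IsChordal.exists_isAttachedClique (hG : IsChordal G) (hcomb : ¬ HasStrictCombOfCliques G)
    (hne : C.Nonempty) (hC : (G.induce C).Preconnected) (hS : G.IsClique (nbhdSet G C)) :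
    ∃ R, IsAttachedClique G C R := by
  obtain ⟨c, hc, hcS⟩ := hG.exists_mem_forall_adj_nbhdSet hcomb hne hC hS
  have hclique : G.IsClique (insert c (nbhdSet G C)) :=
    isClique_insert.2 ⟨hS, fun s hs _ => hcS s hs⟩
  obtain ⟨R, hsub, hR⟩ := hclique.exists_maximal_superset
  exact ⟨R, ⟨hR, (Set.subset_insert _ _).trans hsub, c, hsub (Set.mem_insert c _), hc⟩⟩

theorem IsChordal.exists_mem_forall_not_adj (hG : IsChordal G) (hcomb : ¬ HasStrictCombOfCliques G)
    (hne : C.Nonempty) (hC : (G.induce C).Preconnected) (hS : G.IsClique (nbhdSet G C))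
    (hR : Maximal G.IsClique R) (hCR : Disjoint C R) : ∃ x ∈ R, ∀ y ∈ C, ¬ G.Adj x y := by
  obtain ⟨c, hc, hcS⟩ := hG.exists_mem_forall_adj_nbhdSet hcomb hne hC hS
  obtain ⟨x, hxR, hcx⟩ := exists_not_adj_of_maximal_isClique hR (Set.disjoint_left.1 hCR hc)
  exact ⟨x, hxR, fun y hy hxy =>
    hcx (hcS x ⟨fun hxC => Set.disjoint_left.1 hCR hxC hxR, y, hy, hxy.symm⟩)⟩

lemma exists_mem_nbhdSet_connectedComponentIn_iInter {C R : ℕ → Set V} (hv : ∀ k, v ∈ C k)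
    (hC : ∀ k, (G.induce (C k)).Preconnected) (hR : ∀ k, (R k ∩ C k).Nonempty)
    (hsub : ∀ k, C (k + 1) ⊆ C k \ R k) (T : ℕ) :
    ∃ γ ∈ nbhdSet G (G.connectedComponentIn (⋂ k, C k) v), γ ∈ C T := by
  by_contra! hT
  set W := G.connectedComponentIn (⋂ k, C k) v
  obtain ⟨r, hrR, hrC⟩ := hR T
  have hrW : r ∈ W := by
    refine Reachable.mem_of_forall_adj (W := {x : C T | x.1 ∈ W}) ?_ (hC T ⟨v, hv T⟩ ⟨r, hrC⟩)
      (mem_connectedComponentIn (Set.mem_iInter.2 hv))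
    rintro ⟨a, ha⟩ haW ⟨b, hb⟩ hab
    by_contra hbW
    exact hT b ⟨hbW, a, haW, hab⟩ hb
  exact (hsub T (Set.mem_iInter.1 (connectedComponentIn_subset hrW) (T + 1))).2 hrR

theorem IsChordal.false_of_descending_chain (hG : IsChordal G)
    (hcomb : ¬ HasStrictCombOfCliques G) {C R : ℕ → Set V} (hv : ∀ k, v ∈ C k)
    (hC : ∀ k, (G.induce (C k)).Preconnected) (hR : ∀ k, IsAttachedClique G (C k) (R k))
    (hsub : ∀ k, C (k + 1) ⊆ C k \ R k) : False := by
  have hanti : Antitone C := antitone_nat_of_succ_le fun k => (hsub k).trans Set.sdiff_subset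
  -- the gates, i.e. the neighbours of the component `W` of `v` in `⋂ k, C k`, form the spine
  set W := G.connectedComponentIn (⋂ k, C k) v
  have hWC : ∀ k, W ⊆ C k := fun k => connectedComponentIn_subset.trans (Set.iInter_subset C k)
  have hgate : ∀ γ ∈ nbhdSet G W, ∃ k, γ ∉ C k := by
    rintro γ ⟨hγW, w, hw, hwγ⟩
    by_contra! h
    exact hγW (mem_connectedComponentIn_of_adj hw hwγ (Set.mem_iInter.2 h))
  have hgateR : ∀ γ ∈ nbhdSet G W, ∀ k, γ ∉ C k → γ ∈ R k := by
    rintro γ ⟨-, w, hw, hwγ⟩ k hk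
    exact (hR k).nbhdSet_subset ⟨hk, w, hWC k hw, hwγ⟩
  have hclique : G.IsClique (nbhdSet G W) := by
    intro γ hγ γ' hγ' hne
    obtain ⟨k, hk⟩ := hgate γ hγ
    obtain ⟨k', hk'⟩ := hgate γ' hγ'
    exact (hR (max k k')).maximal.1 (hgateR γ hγ _ fun h => hk (hanti (le_max_left k k') h))
      (hgateR γ' hγ' _ fun h => hk' (hanti (le_max_right k k') h)) hne
  choose! g hgW hgC using exists_mem_nbhdSet_connectedComponentIn_iInter hv hC
    (fun k => (hR k).inter_nonempty) hsub
  choose! e he using fun T => hgate (g T) (hgW T)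
  -- the `n`-th gate `g (t n)` lies in `C (t n)` but not in `C (e (t n))`
  let t : ℕ → ℕ := fun n => Nat.rec 0 (fun _ k => e k + 1) n
  have hte : ∀ n, t n < e (t n) := fun n => lt_of_not_ge fun h => he _ (hanti h (hgC _))
  have ht : Monotone t := monotone_nat_of_le_succ fun n => (hte n).le.trans (Nat.le_succ _)
  have het : Monotone fun n => e (t n) :=
    monotone_nat_of_le_succ fun n => (hte (n + 1)).le.trans' (Nat.le_succ _)
  choose! x hxR hx using fun n => hG.exists_mem_forall_not_adj hcomb ⟨v, hv _⟩ (hC _)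
    ((hR _).maximal.1.subset (hR _).nbhdSet_subset) (hR (e (t n))).maximal
    (Set.disjoint_sdiff_left.mono_left (hsub (e (t n))))
  refine hcomb (hasStrictCombOfCliques_of_adj_iff hclique (y := fun n => g (t n)) (z := x)
    (fun n => hgW (t n)) fun i j => ⟨fun h => ?_, fun h => ?_⟩)
  · by_contra! hij
    exact hx i _ (hanti (ht hij) (hgC (t j))) h
  · obtain ⟨-, w, hw, hwγ⟩ := hgW (t j)
    refine (hR _).maximal.1 (hxR i) (hgateR _ (hgW _) _ fun hmem => he _ (hanti (het h) hmem)) ?_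
    rintro hxg
    exact hx i w (hWC _ hw) (hxg ▸ hwγ.symm)

lemma nbhdSet_connectedComponentIn_diff_subset {T : Set V} (hN : nbhdSet G T ⊆ R) :
    nbhdSet G (G.connectedComponentIn (T \ R) v) ⊆ R := by
  rintro x ⟨hxC, u, hu, hux⟩
  by_contra hxR
  by_cases hxT : x ∈ T
  · exact hxC (mem_connectedComponentIn_of_adj hu hux ⟨hxT, hxR⟩)
  · exact hxR (hN ⟨hxT, u, (connectedComponentIn_subset hu).1, hux⟩)

theorem IsChordal.exists_isAttachedClique_connectedComponentIn (hG : IsChordal G)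
    (hcomb : ¬ HasStrictCombOfCliques G) {T : Set V} (hR : G.IsClique R) (hN : nbhdSet G T ⊆ R)
    (hv : v ∈ T \ R) : ∃ R', IsAttachedClique G (G.connectedComponentIn (T \ R) v) R' :=
  hG.exists_isAttachedClique hcomb ⟨v, mem_connectedComponentIn hv⟩
    preconnected_induce_connectedComponentIn
    (hR.subset (nbhdSet_connectedComponentIn_diff_subset hN))

namespace MaximalCliqueDecomposition

variable (G)

noncomputable def rootClique : Set V :=
  (IsClique.exists_maximal_superset (G := G) (s := ∅) (by simp)).choose

open Classical in
noncomputable def attachedClique (C : Set V) : Set V :=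
  if h : ∃ R, IsAttachedClique G C R then h.choose else ∅

/- A node is a list `[C k, …, C 1]` in which every `C (i + 1)` is a component of `C i` minus the
bag of `[C i, …, C 1]`, and `C 0 = univ` belongs to the root `[]`. -/
def top : List (Set V) → Set V
  | [] => Set.univ
  | C :: _ => C

noncomputable def bag : List (Set V) → Set V
  | [] => rootClique G
  | C :: _ => attachedClique G C

noncomputable def residual (l : List (Set V)) : Set V := top l \ bag G l

def IsNode : List (Set V) → Prop
  | [] => True
  | C :: l => IsNode l ∧ ∃ v ∈ residual G l, G.connectedComponentIn (residual G l) v = C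

noncomputable def branch (v : V) : ℕ → List (Set V)
  | 0 => []
  | k + 1 => G.connectedComponentIn (residual G (branch v k)) v :: branch v k

noncomputable def depth (v : V) : ℕ := sInf {k | v ∉ residual G (branch G v k)}

def Node : Type _ := {l : List (Set V) // IsNode G l}

def tree : SimpleGraph (Node G) := SimpleGraph.fromRel fun a b => ∃ C, a.1 = C :: b.1

variable {G}

lemma maximal_rootClique : Maximal G.IsClique (rootClique G) :=
  (IsClique.exists_maximal_superset (G := G) (s := ∅) (by simp)).choose_spec.2

lemma isAttachedClique_attachedClique (h : ∃ R, IsAttachedClique G C R) :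
    IsAttachedClique G C (attachedClique G C) := by
  rw [attachedClique, dif_pos h]
  exact h.choose_spec

theorem IsNode.isAttachedClique (hG : IsChordal G) (hcomb : ¬ HasStrictCombOfCliques G) :
    ∀ {C : Set V} {l : List (Set V)}, IsNode G (C :: l) → IsAttachedClique G C (bag G (C :: l))
  | _, [], ⟨_, _, hv, rfl⟩ => isAttachedClique_attachedClique <|
      hG.exists_isAttachedClique_connectedComponentIn hcomb maximal_rootClique.1
        (by simp [nbhdSet, top]) hv
  | _, _ :: _, ⟨hl, _, hv, rfl⟩ =>
      have h := hl.isAttachedClique hG hcomb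
      isAttachedClique_attachedClique <|
        hG.exists_isAttachedClique_connectedComponentIn hcomb h.maximal.1 h.nbhdSet_subset hv

theorem IsNode.maximal_bag (hG : IsChordal G) (hcomb : ¬ HasStrictCombOfCliques G) :
    ∀ {l : List (Set V)}, IsNode G l → Maximal G.IsClique (bag G l)
  | [], _ => maximal_rootClique
  | _ :: _, hl => (hl.isAttachedClique hG hcomb).maximal

theorem IsNode.nbhdSet_top_subset_bag (hG : IsChordal G) (hcomb : ¬ HasStrictCombOfCliques G) :
    ∀ {l : List (Set V)}, IsNode G l → nbhdSet G (top l) ⊆ bag G l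
  | [], _ => by simp [nbhdSet, top]
  | _ :: _, hl => (hl.isAttachedClique hG hcomb).nbhdSet_subset

theorem IsNode.eq_branch : ∀ {l : List (Set V)}, IsNode G l → v ∈ top l → branch G v l.length = l
  | [], _, _ => rfl
  | _ :: l, ⟨hl, w, _, hC⟩, hv => by
      subst hC
      have hvl : v ∈ residual G l := connectedComponentIn_subset hv
      rw [List.length_cons, branch, hl.eq_branch hvl.1, connectedComponentIn_eq hv]

lemma antitone_residual_branch (v : V) : Antitone fun k => residual G (branch G v k) :=
  antitone_nat_of_succ_le fun _ _ hx => connectedComponentIn_subset hx.1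

lemma isNode_branch {k : ℕ} (h : ∀ j < k, v ∈ residual G (branch G v j)) :
    IsNode G (branch G v k) := by
  induction k with
  | zero => trivial
  | succ k ih => exact ⟨ih fun j hj => h j (by omega), v, h k (by omega), rfl⟩

@[simp] lemma length_branch (v : V) (k : ℕ) : (branch G v k).length = k := by
  induction k with
  | zero => rfl
  | succ k ih => simp [branch, ih]

theorem exists_not_mem_residual_branch (hG : IsChordal G) (hcomb : ¬ HasStrictCombOfCliques G)
    (v : V) : ∃ k, v ∉ residual G (branch G v k) := by
  by_contra! h
  exact hG.false_of_descending_chain hcomb (C := fun k => top (branch G v (k + 1)))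
    (R := fun k => bag G (branch G v (k + 1))) (fun k => mem_connectedComponentIn (h k))
    (fun _ => preconnected_induce_connectedComponentIn)
    (fun k => (isNode_branch (k := k + 1) fun j _ => h j).isAttachedClique hG hcomb)
    (fun _ => connectedComponentIn_subset)

lemma mem_residual_branch_of_lt_depth {k : ℕ} (hk : k < depth G v) :
    v ∈ residual G (branch G v k) :=
  by_contra fun h => (Nat.sInf_le h).not_gt hk

lemma lt_depth_of_mem_residual_branch (hG : IsChordal G) (hcomb : ¬ HasStrictCombOfCliques G)
    {k : ℕ} (hk : v ∈ residual G (branch G v k)) : k < depth G v :=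
  lt_of_not_ge fun hle =>
    Nat.sInf_mem (exists_not_mem_residual_branch hG hcomb v) (antitone_residual_branch v hle hk)

variable (G) in
noncomputable def home (v : V) : Node G :=
  ⟨branch G v (depth G v), isNode_branch fun _ => mem_residual_branch_of_lt_depth⟩

lemma mem_top_home : v ∈ top (home G v).1 := by
  simp only [home]
  cases h : depth G v with
  | zero => trivial
  | succ k => exact mem_connectedComponentIn (mem_residual_branch_of_lt_depth (h ▸ k.lt_succ_self))

lemma mem_bag_home (hG : IsChordal G) (hcomb : ¬ HasStrictCombOfCliques G) :
    v ∈ bag G (home G v).1 := by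
  by_contra h
  exact Nat.sInf_mem (exists_not_mem_residual_branch hG hcomb v) ⟨mem_top_home, h⟩

lemma home_eq (hG : IsChordal G) (hcomb : ¬ HasStrictCombOfCliques G) {l : List (Set V)}
    (hl : IsNode G l) (hv : v ∈ top l) (hvb : v ∈ bag G l) : home G v = ⟨l, hl⟩ := by
  have hdepth : depth G v = l.length := by
    refine le_antisymm (Nat.sInf_le ?_) ?_
    · show v ∉ residual G (branch G v l.length)
      rw [hl.eq_branch hv]
      exact fun h => h.2 hvb
    · match l, hl, hv with
      | [], _, _ => exact Nat.zero_le _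
      | _ :: l', ⟨hl', w, _, hC⟩, hv =>
        subst hC
        have hvl : v ∈ residual G l' := connectedComponentIn_subset hv
        refine lt_depth_of_mem_residual_branch hG hcomb ?_
        rwa [hl'.eq_branch hvl.1]
  refine Subtype.ext ?_
  show branch G v (depth G v) = l
  rw [hdepth, hl.eq_branch hv]

lemma tree_adj_cons {C : Set V} {l : List (Set V)} (h : IsNode G (C :: l)) :
    (tree G).Adj ⟨C :: l, h⟩ ⟨l, h.1⟩ :=
  (fromRel_adj _ _ _).2
    ⟨fun heq => by simpa using congrArg (fun a : Node G => a.1.length) heq, Or.inl ⟨C, rfl⟩⟩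

lemma reachable_root (a : Node G) : (tree G).Reachable a ⟨[], trivial⟩ := by
  obtain ⟨l, hl⟩ := a
  induction l with
  | nil => rfl
  | cons C l ih => exact (tree_adj_cons hl).reachable.trans (ih hl.1)

lemma tree_isTree : (tree G).IsTree := by
  refine ⟨connected_iff _ |>.2 ⟨fun a b => (reachable_root a).trans (reachable_root b).symm,
    ⟨⟨[], trivial⟩⟩⟩, isAcyclic_of_rank (fun a : Node G => a.1.length) ?_ ?_⟩
  · rintro a b hab
    rcases ((fromRel_adj _ _ _).1 hab).2 with ⟨C, h⟩ | ⟨C, h⟩ <;> simp [h]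
  · rintro a b b' hab hab' hb hb'
    rcases ((fromRel_adj _ _ _).1 hab).2 with ⟨C, h⟩ | ⟨C, h⟩ <;>
      rcases ((fromRel_adj _ _ _).1 hab').2 with ⟨C', h'⟩ | ⟨C', h'⟩ <;>
      simp only [h, h', List.length_cons] at hb hb' <;> try omega
    exact Subtype.ext (List.cons.inj (h.symm.trans h')).2

theorem reachable_home (hG : IsChordal G) (hcomb : ¬ HasStrictCombOfCliques G) (v : V) :
    ∀ (l : List (Set V)) (hl : IsNode G l) (hv : v ∈ bag G l),
      ((tree G).induce {t : Node G | v ∈ bag G t.1}).Reachable ⟨⟨l, hl⟩, hv⟩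
        ⟨home G v, mem_bag_home hG hcomb⟩
  | [], hl, hv => by
    rw [show (⟨⟨[], hl⟩, hv⟩ : {t : Node G | v ∈ bag G t.1}) = ⟨home G v, mem_bag_home hG hcomb⟩
      from Subtype.ext (home_eq hG hcomb hl trivial hv).symm]
  | C :: l, hl, hv => by
    by_cases hvC : v ∈ C
    · rw [show (⟨⟨C :: l, hl⟩, hv⟩ : {t : Node G | v ∈ bag G t.1}) =
        ⟨home G v, mem_bag_home hG hcomb⟩ from Subtype.ext (home_eq hG hcomb hl hvC hv).symm]
    have hvN : v ∈ nbhdSet G C := ((hl.isAttachedClique hG hcomb).subset_union hv).resolve_left hvC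
    obtain ⟨hl', w, -, rfl⟩ := id hl
    have hvl : v ∈ bag G l :=
      nbhdSet_connectedComponentIn_diff_subset (hl'.nbhdSet_top_subset_bag hG hcomb) hvN
    exact (induce_adj.2 (tree_adj_cons hl)).reachable.trans (reachable_home hG hcomb v l hl' hvl)

theorem connected_induce_mem_bag (hG : IsChordal G) (hcomb : ¬ HasStrictCombOfCliques G) (v : V) :
    ((tree G).induce {t : Node G | v ∈ bag G t.1}).Connected :=
  (connected_iff _).2 ⟨fun a b => (reachable_home hG hcomb v _ a.1.2 a.2).trans
    (reachable_home hG hcomb v _ b.1.2 b.2).symm, ⟨⟨home G v, mem_bag_home hG hcomb⟩⟩⟩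

lemma mem_bag_home_of_adj (hG : IsChordal G) (hcomb : ¬ HasStrictCombOfCliques G) {u : V}
    (huv : G.Adj u v) (hle : depth G u ≤ depth G v) : u ∈ bag G (home G v).1 := by
  by_contra hu
  have hnode := (home G v).2
  by_cases huT : u ∈ top (home G v).1
  · have hlt := lt_depth_of_mem_residual_branch hG hcomb (k := (home G v).1.length)
      (by rw [hnode.eq_branch huT]; exact ⟨huT, hu⟩)
    simp only [home, length_branch] at hlt
    omega
  · exact hu (hnode.nbhdSet_top_subset_bag hG hcomb ⟨huT, v, mem_top_home, huv.symm⟩)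

theorem exists_mem_bag_of_adj (hG : IsChordal G) (hcomb : ¬ HasStrictCombOfCliques G) {u : V}
    (huv : G.Adj u v) : ∃ t : Node G, u ∈ bag G t.1 ∧ v ∈ bag G t.1 := by
  rcases le_total (depth G u) (depth G v) with h | h
  · exact ⟨home G v, mem_bag_home_of_adj hG hcomb huv h, mem_bag_home hG hcomb⟩
  · exact ⟨home G u, mem_bag_home hG hcomb, mem_bag_home_of_adj hG hcomb huv.symm h⟩

end MaximalCliqueDecomposition

end

theorem stmt4 {V : Type u} (G : SimpleGraph V) (hchordal : IsChordal G)
    (hcomb : ¬ HasStrictCombOfCliques G) :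
    ∃ (ι : Type u) (T : SimpleGraph ι) (bag : ι → Set V),
      IsTreeDecomp G T bag ∧ ∀ t, Maximal G.IsClique (bag t) := by
  open MaximalCliqueDecomposition in
  exact ⟨Node G, tree G, fun t => bag G t.1,
    ⟨tree_isTree, fun v => ⟨home G v, mem_bag_home hchordal hcomb⟩,
      fun _ _ huv => exists_mem_bag_of_adj hchordal hcomb huv,
      connected_induce_mem_bag hchordal hcomb⟩,
    fun t => t.2.maximal_bag hchordal hcomb⟩
end

section
/- Let G be a chordal graph and let A, B be disjoint connected nonempty vertex sets with no edge between A and B. Then every minimal A–B separator that is disjoint from A ∪ B is a clique. -/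
open SimpleGraph

variable {V W : Type*}

/-! Let `x ≠ y` lie in `S`, and let `C_A`, `C_B` be the components of `G - S` containing `A` and
`B`. They are disjoint with no edge between them, since `S` separates `A` from `B`, and by
minimality of `S` both `x` and `y` have neighbours in each of them. Hence `x` and `y` are joined
by an induced path through `C_A` and by one through `C_B`. If `x` and `y` were not adjacent, both
paths would have length at least two and together they would form an induced cycle of length at
least four. -/

namespace SimpleGraph

variable {G : SimpleGraph V}

namespace Walk

variable {u v : V}

def IsInducedPath (p : G.Walk u v) : Prop :=
  ∀ i j, i + 1 < j → j ≤ p.length →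
    p.getVert i ≠ p.getVert j ∧ ¬ G.Adj (p.getVert i) (p.getVert j)

lemma IsInducedPath.getVert_ne {p : G.Walk u v} (hp : p.IsInducedPath) {i j : ℕ} (hij : i < j)
    (hj : j ≤ p.length) : p.getVert i ≠ p.getVert j := by
  rcases (by omega : j = i + 1 ∨ i + 1 < j) with rfl | h
  · exact (p.adj_getVert_succ (by omega)).ne
  · exact (hp i j h hj).1

lemma IsInducedPath.getVert_mem {p : G.Walk u v} (hp : p.IsInducedPath) {C : Set V}
    (hC : ∀ w ∈ p.support, w = u ∨ w = v ∨ w ∈ C) {i : ℕ} (hi₀ : 0 < i)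
    (hi : i < p.length) :
    p.getVert i ∈ C := by
  rcases hC _ (p.getVert_mem_support i) with h | h | h
  · exact absurd (h.trans p.getVert_zero.symm) (hp.getVert_ne hi₀ hi.le).symm
  · exact absurd (h.trans p.getVert_length.symm) (hp.getVert_ne hi le_rfl)
  · exact h

lemma two_le_length (p : G.Walk u v) (hne : u ≠ v) (hnadj : ¬ G.Adj u v) : 2 ≤ p.length := by
  by_contra! h
  interval_cases hp : p.length
  · exact hne (eq_of_length_eq_zero hp)
  · exact hnadj (adj_of_length_eq_one hp)

lemma exists_shortcut (p : G.Walk u v) {i j : ℕ} (hij : i < j) (hj : j ≤ p.length)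
    (s : G.Walk (p.getVert i) (p.getVert j)) :
    ∃ q : G.Walk u v, q.length = i + s.length + (p.length - j) ∧
      ∀ w ∈ q.support, w ∈ p.support ∨ w ∈ s.support := by
  refine ⟨(p.take i).append (s.append (p.drop j)), ?_, fun w hw => ?_⟩
  · simp only [length_append, take_length, drop_length]
    omega
  · rw [mem_support_append_iff, mem_support_append_iff] at hw
    rcases hw with hw | hw | hw
    · exact .inl ((p.isSubwalk_take i).support_subset hw)
    · exact .inr hw
    · exact .inl ((p.isSubwalk_drop j).support_subset hw)

lemma exists_isInducedPath (p : G.Walk u v) :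
    ∃ q : G.Walk u v, q.IsInducedPath ∧ q.support ⊆ p.support := by
  induction hn : p.length using Nat.strong_induction_on generalizing p with
  | _ n ih =>
  by_cases hp : p.IsInducedPath
  · exact ⟨p, hp, List.Subset.refl _⟩
  simp only [IsInducedPath, not_forall, not_and_or, not_not] at hp
  obtain ⟨i, j, hij, hj, hchord⟩ := hp
  obtain ⟨s, hs, hsp⟩ : ∃ s : G.Walk (p.getVert i) (p.getVert j),
      s.length ≤ 1 ∧ s.support ⊆ p.support := by
    rcases hchord with heq | hadj
    · exact ⟨nil.copy rfl heq, by simp, by simp [p.getVert_mem_support]⟩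
    · exact ⟨hadj.toWalk, by simp, by simp [List.subset_def, p.getVert_mem_support]⟩
  obtain ⟨q, hq, hqp⟩ := p.exists_shortcut (by omega) hj s
  obtain ⟨r, hr, hrq⟩ := ih q.length (by omega) q rfl
  exact ⟨r, hr, fun w hw => (hqp w (hrq hw)).elim id (hsp ·)⟩

end Walk

/-- The union of the components of `G - S` that meet `X`. -/
def sideOf (G : SimpleGraph V) (S X : Set V) : Set V :=
  {v | ∃ a ∈ X, ∃ p : G.Walk v a, ∀ w ∈ p.support, w ∉ S}

variable {S X : Set V}

lemma sideOf_mono {Y : Set V} (hXY : X ⊆ Y) : G.sideOf S X ⊆ G.sideOf S Y :=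
  fun _ ⟨a, ha, p, hp⟩ => ⟨a, hXY ha, p, hp⟩

lemma subset_sideOf (hSX : Disjoint S X) : X ⊆ G.sideOf S X :=
  fun a ha => ⟨a, ha, .nil, by simpa using hSX.notMem_of_mem_right ha⟩

lemma mem_sideOf_of_mem_support {a v w : V} (ha : a ∈ X) {p : G.Walk v a}
    (hp : ∀ z ∈ p.support, z ∉ S) (hw : w ∈ p.support) : w ∈ G.sideOf S X := by
  classical exact
    ⟨a, ha, p.dropUntil w hw, fun z hz => hp z (p.support_dropUntil_subset_support hw hz)⟩

lemma Connected.exists_walk_of_induce (hX : (G.induce X).Connected) {a b : V} (ha : a ∈ X)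
    (hb : b ∈ X) : ∃ p : G.Walk a b, ∀ w ∈ p.support, w ∈ X := by
  obtain ⟨r⟩ := hX.preconnected ⟨a, ha⟩ ⟨b, hb⟩
  have hr : ∀ w ∈ (r.map (Embedding.induce X).toHom).support, w ∈ X := by
    intro w hw
    rw [Walk.support_map, List.mem_map] at hw
    obtain ⟨z, -, rfl⟩ := hw
    exact z.2
  exact ⟨_, hr⟩

lemma exists_walk_of_mem_sideOf (hX : (G.induce X).Connected) (hSX : Disjoint S X) {u v : V}
    (hu : u ∈ G.sideOf S X) (hv : v ∈ G.sideOf S X) :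
    ∃ p : G.Walk u v, ∀ w ∈ p.support, w ∈ G.sideOf S X := by
  obtain ⟨a, ha, pu, hpu⟩ := hu
  obtain ⟨b, hb, pv, hpv⟩ := hv
  obtain ⟨r, hr⟩ := hX.exists_walk_of_induce ha hb
  refine ⟨pu.append (r.append pv.reverse), fun w hw => ?_⟩
  simp only [Walk.mem_support_append_iff, Walk.support_reverse, List.mem_reverse] at hw
  rcases hw with hw | hw | hw
  · exact mem_sideOf_of_mem_support ha hpu hw
  · exact subset_sideOf hSX (hr w hw)
  · exact mem_sideOf_of_mem_support hb hpv hw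

lemma Walk.exists_adj_sideOf {a b : V} (p : G.Walk a b) (ha : a ∉ S)
    (hp : ∃ z ∈ p.support, z ∈ S) :
    ∃ z ∈ p.support, z ∈ S ∧ ∃ u ∈ G.sideOf S {a}, G.Adj u z := by
  induction p with
  | nil =>
    obtain ⟨z, hz, hzS⟩ := hp
    rw [Walk.support_nil, List.mem_singleton] at hz
    exact absurd (hz ▸ hzS) ha
  | @cons a a' _ hadj p ih =>
    by_cases ha' : a' ∈ S
    · exact ⟨a', by simp, ha', a, subset_sideOf (by simpa using ha) rfl, hadj⟩
    obtain ⟨z, hz, hzS⟩ := hp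
    rw [Walk.support_cons, List.mem_cons] at hz
    obtain ⟨z, hz, hzS, u, ⟨_, rfl, q, hq⟩, hu⟩ :=
      ih ha' ⟨z, hz.resolve_left (by rintro rfl; exact ha hzS), hzS⟩
    refine ⟨z, by simp [hz], hzS, u, ⟨a, rfl, q.concat hadj.symm, fun w hw => ?_⟩, hu⟩
    rw [Walk.support_concat, List.mem_append, List.mem_singleton] at hw
    rcases hw with hw | rfl
    exacts [hq w hw, ha]

end SimpleGraph

section

variable {G : SimpleGraph V} {A B S : Set V}

open SimpleGraph

lemma not_isChordal_of_induced_cycle {u : V} (c : G.Walk u u) (hn : 4 ≤ c.length)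
    (hc : ∀ a b, a + 1 < b → b < c.length → (a = 0 → b + 1 < c.length) →
      c.getVert a ≠ c.getVert b ∧ ¬ G.Adj (c.getVert a) (c.getVert b)) :
    ¬ IsChordal G := by
  intro hG
  set n := c.length with hn_def
  have : NeZero n := ⟨by omega⟩
  have : Fact (1 < n) := ⟨by omega⟩
  have hsucc : ∀ i j : ZMod n, j = i + 1 ↔ j.val = (i.val + 1) % n := fun i j =>
    ⟨fun h => by rw [h, ZMod.val_add, ZMod.val_one],
     fun h => ZMod.val_injective n (by rw [h, ZMod.val_add, ZMod.val_one])⟩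
  have hstep : ∀ k < n, G.Adj (c.getVert k) (c.getVert ((k + 1) % n)) := by
    intro k hk
    rcases (by omega : k + 1 < n ∨ k + 1 = n) with h | h
    · rw [Nat.mod_eq_of_lt h]
      exact c.adj_getVert_succ hk
    · rw [h, Nat.mod_self, c.getVert_zero]
      have := c.adj_getVert_succ hk
      rwa [h, hn_def, c.getVert_length] at this
  have hcyc : ∀ a b, a < n → b < n → a ≠ b →
      (c.getVert a = c.getVert b ∨ G.Adj (c.getVert a) (c.getVert b)) →
      b = (a + 1) % n ∨ a = (b + 1) % n := by
    suffices h : ∀ a b, a < b → b < n →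
        (c.getVert a = c.getVert b ∨ G.Adj (c.getVert a) (c.getVert b)) →
        b = (a + 1) % n ∨ a = (b + 1) % n by
      intro a b ha hb hab hcoinc
      rcases lt_or_gt_of_ne hab with hab | hab
      · exact h a b hab hb hcoinc
      · exact (h b a hab ha (hcoinc.imp Eq.symm Adj.symm)).symm
    intro a b hab hb hcoinc
    by_contra hne
    have hb' : b ≠ a + 1 := fun h => hne (.inl (h ▸ (Nat.mod_eq_of_lt (h ▸ hb)).symm))
    have ha' : a = 0 → b + 1 < n := fun h0 => by
      by_contra hbn
      exact hne (.inr (by rw [h0, (by omega : b + 1 = n), Nat.mod_self]))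
    exact not_or_intro (hc a b (by omega) hb ha').1 (hc a b (by omega) hb ha').2 hcoinc
  refine hG n hn (fun i => c.getVert i.val) (fun i j hij => ?_) (fun i j => ?_)
  · by_contra hne
    have hval : i.val ≠ j.val := fun h => hne (ZMod.val_injective n h)
    rcases hcyc _ _ (ZMod.val_lt i) (ZMod.val_lt j) hval (.inl hij) with h | h
    · exact (hstep _ (ZMod.val_lt i)).ne (h ▸ hij)
    · exact (hstep _ (ZMod.val_lt j)).ne (h ▸ hij.symm)
  · rw [hsucc, hsucc]
    constructor
    · intro hadj
      exact hcyc _ _ (ZMod.val_lt i) (ZMod.val_lt j) (fun h => hadj.ne (by rw [h])) (.inr hadj)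
    · rintro (h | h)
      · exact h ▸ hstep _ (ZMod.val_lt i)
      · exact (h ▸ hstep _ (ZMod.val_lt j)).symm

lemma not_isChordal_of_two_induced_paths {x y : V} {C D : Set V}
    (hCD : ∀ c ∈ C, ∀ d ∈ D, c ≠ d ∧ ¬ G.Adj c d) {P Q : G.Walk x y}
    (hP : P.IsInducedPath) (hPC : ∀ w ∈ P.support, w = x ∨ w = y ∨ w ∈ C)
    (hP₂ : 2 ≤ P.length) (hQ : Q.IsInducedPath) (hQD : ∀ w ∈ Q.support, w = x ∨ w = y ∨ w ∈ D)
    (hQ₂ : 2 ≤ Q.length) :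
    ¬ IsChordal G := by
  set p := P.length
  set n := (P.append Q.reverse).length
  have hn : n = p + Q.length := by simp [n, p]
  have hgP : ∀ k ≤ p, (P.append Q.reverse).getVert k = P.getVert k := fun k hk => by
    simp [Walk.getVert_append', hk, p]
  have hgQ : ∀ k, p ≤ k → k ≤ n → (P.append Q.reverse).getVert k = Q.getVert (n - k) :=
    fun k hk hkn => by
      rw [Walk.getVert_append, if_neg (by omega), Walk.getVert_reverse]
      congr 1
      omega
  refine not_isChordal_of_induced_cycle (P.append Q.reverse) (by omega) fun a b hab hb ha => ?_
  by_cases hbp : b ≤ p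
  · rw [hgP a (by omega), hgP b hbp]
    exact hP a b hab hbp
  by_cases hpa : p ≤ a
  · rw [hgQ a hpa (by omega), hgQ b (by omega) (by omega), ne_comm, G.adj_comm]
    exact hQ _ _ (by omega) (by omega)
  rw [hgP a (by omega), hgQ b (by omega) (by omega)]
  rcases Nat.eq_zero_or_pos a with rfl | ha₀
  · simpa only [P.getVert_zero, Q.getVert_zero] using hQ 0 (n - b) (by omega) (by omega)
  · exact hCD _ (hP.getVert_mem hPC ha₀ (by omega)) _
      (hQ.getVert_mem hQD (by omega) (by omega))

lemma Separates.symm (h : Separates G A B S) : Separates G B A S :=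
  fun b hb a ha p => by simpa using h a ha b hb p.reverse

lemma IsMinimalSeparator.symm (h : IsMinimalSeparator G A B S) :
    IsMinimalSeparator G B A S :=
  ⟨h.1.symm, fun S' hS' hsep => h.2 S' hS' hsep.symm⟩

lemma Separates.ne_and_not_adj (h : Separates G A B S) {v w : V}
    (hv : v ∈ G.sideOf S A) (hw : w ∈ G.sideOf S B) : v ≠ w ∧ ¬ G.Adj v w := by
  obtain ⟨a, ha, pa, hpa⟩ := hv
  obtain ⟨b, hb, pb, hpb⟩ := hw
  have hshort : ∀ s : G.Walk v w, (∀ z ∈ s.support, z = v ∨ z = w) → False := by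
    intro s hs
    obtain ⟨z, hz, hzS⟩ := h a ha b hb (pa.reverse.append (s.append pb))
    simp only [Walk.mem_support_append_iff, Walk.support_reverse, List.mem_reverse] at hz
    rcases hz with hz | hz | hz
    · exact hpa z hz hzS
    · rcases hs z hz with rfl | rfl
      · exact hpa z pa.start_mem_support hzS
      · exact hpb z pb.start_mem_support hzS
    · exact hpb z hz hzS
  exact ⟨fun hvw => hshort (Walk.nil.copy rfl hvw) (by simp),
    fun hadj => hshort hadj.toWalk (by simp)⟩

lemma IsMinimalSeparator.exists_adj_sideOf (h : IsMinimalSeparator G A B S)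
    (hSA : Disjoint S A) {s : V} (hs : s ∈ S) : ∃ u ∈ G.sideOf S A, G.Adj u s := by
  have hnsep : ¬ Separates G A B (S \ {s}) := fun hsep =>
    ((h.2 _ Set.sdiff_subset hsep).symm ▸ hs : s ∈ S \ {s}).2 rfl
  simp only [Separates, not_forall, exists_prop] at hnsep
  obtain ⟨a, ha, b, hb, p, hp⟩ := hnsep
  obtain ⟨z, hz, hzS, u, hu, huz⟩ :=
    p.exists_adj_sideOf (hSA.notMem_of_mem_right ha) (h.1 a ha b hb p)
  obtain rfl : z = s := by
    by_contra hzs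
    exact hp ⟨z, hz, hzS, hzs⟩
  exact ⟨u, sideOf_mono (Set.singleton_subset_iff.2 ha) hu, huz⟩

lemma IsMinimalSeparator.exists_walk_sideOf (h : IsMinimalSeparator G A B S)
    (hSA : Disjoint S A) (hA : (G.induce A).Connected) {x y : V} (hx : x ∈ S) (hy : y ∈ S) :
    ∃ p : G.Walk x y, ∀ w ∈ p.support, w = x ∨ w = y ∨ w ∈ G.sideOf S A := by
  obtain ⟨ux, hux, hxadj⟩ := h.exists_adj_sideOf hSA hx
  obtain ⟨uy, huy, hyadj⟩ := h.exists_adj_sideOf hSA hy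
  obtain ⟨p, hp⟩ := exists_walk_of_mem_sideOf hA hSA hux huy
  refine ⟨.cons hxadj.symm (p.concat hyadj), fun w hw => ?_⟩
  rw [Walk.support_cons, Walk.support_concat, List.mem_cons, List.mem_append,
    List.mem_singleton] at hw
  rcases hw with rfl | hw | rfl
  exacts [.inl rfl, .inr (.inr (hp w hw)), .inr (.inl rfl)]

lemma IsChordal.adj_of_walks (hG : IsChordal G) {C D : Set V}
    (hCD : ∀ c ∈ C, ∀ d ∈ D, c ≠ d ∧ ¬ G.Adj c d) {x y : V} (hxy : x ≠ y)
    {P Q : G.Walk x y} (hPC : ∀ w ∈ P.support, w = x ∨ w = y ∨ w ∈ C)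
    (hQD : ∀ w ∈ Q.support, w = x ∨ w = y ∨ w ∈ D) : G.Adj x y := by
  by_contra hnadj
  obtain ⟨P', hP', hP'P⟩ := P.exists_isInducedPath
  obtain ⟨Q', hQ', hQ'Q⟩ := Q.exists_isInducedPath
  exact not_isChordal_of_two_induced_paths hCD hP' (fun w hw => hPC w (hP'P hw))
    (P'.two_le_length hxy hnadj) hQ' (fun w hw => hQD w (hQ'Q hw))
    (Q'.two_le_length hxy hnadj) hG

end

universe u

theorem stmt8_general {V : Type u} (G : SimpleGraph V) (hchordal : IsChordal G) (A B : Set V)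
    (hAconn : (G.induce A).Connected) (hBconn : (G.induce B).Connected)
    (S : Set V) (hmin : IsMinimalSeparator G A B S) (hSdisj : Disjoint S (A ∪ B)) :
    G.IsClique S := by
  intro x hx y hy hxy
  obtain ⟨P, hP⟩ :=
    hmin.exists_walk_sideOf (hSdisj.mono_right Set.subset_union_left) hAconn hx hy
  obtain ⟨Q, hQ⟩ :=
    hmin.symm.exists_walk_sideOf (hSdisj.mono_right Set.subset_union_right) hBconn hx hy
  exact hchordal.adj_of_walks (fun _ hc _ hd => hmin.1.ne_and_not_adj hc hd) hxy hP hQ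

theorem stmt8 {V : Type u} (G : SimpleGraph V) (hchordal : IsChordal G) (A B : Set V) (hA : A.Nonempty) (hB : B.Nonempty)
    (hAconn : (G.induce A).Connected) (hBconn : (G.induce B).Connected)
    (hdisj : Disjoint A B) (hnoedge : ∀ a ∈ A, ∀ b ∈ B, ¬ G.Adj a b)
    (S : Set V) (hmin : IsMinimalSeparator G A B S) (hSdisj : Disjoint S (A ∪ B)) :
    G.IsClique S :=
  stmt8_general G hchordal A B hAconn hBconn S hmin hSdisj
end

section
/- The graph 𝓗, obtained from a countably infinite clique by adding two non-adjacent vertices each adjacent to all clique vertices, admits no tree-decomposition all of whose parts are finite cliques. -/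
open SimpleGraph

variable {V W : Type*}

/-!
Let `a`, `b` be the two non-adjacent dominating vertices; since the parts are cliques, the
subtrees `Tₐ` and `T_b` of nodes whose parts contain `a` resp. `b` are disjoint. Let `ss'` be
the edge by which a path from `Tₐ` to `T_b` leaves `Tₐ`, so that `s ∈ Tₐ` and `T_b` lies on the
side of `s'` in `T - ss'`. Every clique vertex `i` is adjacent to both `a` and `b`, so its
subtree `Tᵢ` meets `Tₐ` and `T_b`; if `s ∉ Tᵢ`, then `Tₐ ∪ Tᵢ ∪ T_b` would connect `s` to `s'`
in `T - ss'`. Hence the part at `s` contains the whole infinite clique.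
-/

namespace SimpleGraph

variable {ι : Type*} {T : SimpleGraph ι}

lemma reachable_deleteEdges_of_connected_induce {A : Set ι} (hA : (T.induce A).Connected)
    {x y s s' : ι} (hx : x ∈ A) (hy : y ∈ A) (hss' : s ∉ A ∨ s' ∉ A) :
    (T.deleteEdges {s(s, s')}).Reachable x y := by
  let f : T.induce A →g T.deleteEdges {s(s, s')} :=
    ⟨Subtype.val, fun {u v} huv => deleteEdges_adj.mpr ⟨huv, fun h => by
      rcases Sym2.eq_iff.mp (Set.mem_singleton_iff.mp h) with ⟨rfl, rfl⟩ | ⟨rfl, rfl⟩ <;>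
        simp at hss'⟩⟩
  exact (hA.preconnected ⟨x, hx⟩ ⟨y, hy⟩).map f

lemma Walk.IsPath.exists_adj_mem_notMem_reachable_deleteEdges {A : Set ι} {x y : ι}
    {p : T.Walk x y} (hp : p.IsPath) (hx : x ∈ A) (hy : y ∉ A) :
    ∃ s s', T.Adj s s' ∧ s ∈ A ∧ s' ∉ A ∧ (T.deleteEdges {s(s, s')}).Reachable s' y := by
  induction p with
  | nil => exact absurd hx hy
  | @cons u m y hum p ih =>
    rw [Walk.cons_isPath_iff] at hp
    by_cases hm : m ∈ A
    · exact ih hp.1 hm hy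
    · refine ⟨u, m, hum, hx, hm, ⟨p.toDeleteEdges _ fun e he he' => hp.2 ?_⟩⟩
      rw [Set.mem_singleton_iff.mp he'] at he
      exact p.fst_mem_support_of_mem_edges he

end SimpleGraph

lemma IsTreeDecomp.exists_commonNeighbors_subset {ι : Type*} {G : SimpleGraph V}
    {T : SimpleGraph ι} {bag : ι → Set V} (htd : IsTreeDecomp G T bag) {a b : V}
    (hab : ∀ t, a ∈ bag t → b ∉ bag t) : ∃ s, G.commonNeighbors a b ⊆ bag s := by
  classical
  obtain ⟨htree, hcover, hedge, hconn⟩ := htd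
  obtain ⟨ta, hta⟩ := hcover a
  obtain ⟨tb, htb⟩ := hcover b
  obtain ⟨s, s', hss', hsa, hs'a, hs'tb⟩ :=
    (htree.connected.preconnected ta tb).some.toPath.2
      |>.exists_adj_mem_notMem_reachable_deleteEdges (A := {t | a ∈ bag t}) hta (hab tb · htb)
  let T' := T.deleteEdges {s(s, s')}
  have hbridge : ¬ T'.Reachable s s' :=
    isBridge_iff.mp (isAcyclic_iff_forall_adj_isBridge.mp htree.isAcyclic hss')
  refine ⟨s, fun v ⟨hav, hbv⟩ => ?_⟩
  by_contra hvs
  obtain ⟨t₁, ht₁a, ht₁v⟩ := hedge a v hav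
  obtain ⟨t₂, ht₂b, ht₂v⟩ := hedge b v hbv
  have hs_t₁ : T'.Reachable s t₁ :=
    reachable_deleteEdges_of_connected_induce (hconn a) hsa ht₁a (.inr hs'a)
  have ht₁_t₂ : T'.Reachable t₁ t₂ :=
    reachable_deleteEdges_of_connected_induce (hconn v) ht₁v ht₂v (.inl hvs)
  have ht₂_tb : T'.Reachable t₂ tb :=
    reachable_deleteEdges_of_connected_induce (hconn b) ht₂b htb (.inl (hab s hsa))
  exact hbridge (hs_t₁.trans (ht₁_t₂.trans (ht₂_tb.trans hs'tb.symm)))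

universe u

theorem stmt10 {ι : Type u} (T : SimpleGraph ι) (bag : ι → Set (ℕ ⊕ Bool))
    (htd : IsTreeDecomp HGraph T bag) :
    ¬ ∀ t, (bag t).Finite ∧ HGraph.IsClique (bag t) := by
  intro h
  obtain ⟨s, hs⟩ := htd.exists_commonNeighbors_subset (a := .inr false) (b := .inr true)
    fun t ha hb => (h t).2 ha hb (by simp)
  exact Set.infinite_of_injective_forall_mem Sum.inl_injective
    (fun i => hs ⟨trivial, trivial⟩) (h s).1
end

section
/- If a graph G admits a tree-decomposition into finite cliques and H is an induced minor of G, then H also admits a tree-decomposition into finite cliques. -/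
open SimpleGraph

variable {V W : Type*}

universe u v

/-!
Contract the branch sets: the new bag at a node `t` consists of the vertices of `H` whose branch
set meets the old bag at `t`. The bags containing a vertex of `H` form a subtree because its branch
set is connected and every edge inside it lies in some bag. A new bag is finite because the branch
sets are disjoint, and it is a clique because two branch sets meeting a common clique are joined
by an edge.
-/

def branchBag {ι : Type*} (B : W → Set V) (bag : ι → Set V) (t : ι) : Set W :=
  {w | (B w ∩ bag t).Nonempty}

namespace IsTreeDecomp

variable {ι : Type*} {G : SimpleGraph V} {T : SimpleGraph ι} {bag : ι → Set V}

lemma reachable_of_mem_bag (htd : IsTreeDecomp G T bag) {x : V} {A : Set ι}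
    (hA : {t | x ∈ bag t} ⊆ A) {t₁ t₂ : ι} (h₁ : x ∈ bag t₁) (h₂ : x ∈ bag t₂)
    (m₁ : t₁ ∈ A) (m₂ : t₂ ∈ A) :
    (T.induce A).Reachable ⟨t₁, m₁⟩ ⟨t₂, m₂⟩ :=
  ((htd.2.2.2 x).preconnected ⟨t₁, h₁⟩ ⟨t₂, h₂⟩).map (T.induceHomOfLE hA).toHom

lemma induce_setOf_inter_nonempty_connected (htd : IsTreeDecomp G T bag) {X : Set V}
    (hX : (G.induce X).Connected) : (T.induce {t | (X ∩ bag t).Nonempty}).Connected := by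
  set A := {t | (X ∩ bag t).Nonempty}
  have hA : ∀ x ∈ X, {t | x ∈ bag t} ⊆ A := fun x hx t ht => ⟨x, hx, ht⟩
  have walk_reachable : ∀ {a b : X} (p : (G.induce X).Walk a b) {t₁ t₂ : ι}
      (h₁ : (a : V) ∈ bag t₁) (h₂ : (b : V) ∈ bag t₂) (m₁ : t₁ ∈ A)
      (m₂ : t₂ ∈ A), (T.induce A).Reachable ⟨t₁, m₁⟩ ⟨t₂, m₂⟩ := by
    intro a b p
    induction p with
    | nil => exact htd.reachable_of_mem_bag (hA _ (Subtype.prop _))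
    | @cons a c b hac p ih =>
      intro t₁ t₂ h₁ h₂ m₁ m₂
      obtain ⟨t, hat, hct⟩ := htd.2.2.1 a c hac
      have mt : t ∈ A := ⟨a, a.2, hat⟩
      exact (htd.reachable_of_mem_bag (hA a a.2) h₁ hat m₁ mt).trans (ih hct h₂ mt m₂)
  obtain ⟨x, hx⟩ := hX.nonempty
  obtain ⟨t, ht⟩ := htd.2.1 x
  have : Nonempty A := ⟨⟨t, x, hx, ht⟩⟩
  refine ⟨fun ⟨t₁, m₁⟩ ⟨t₂, m₂⟩ => ?_⟩
  obtain ⟨y, hyX, hy⟩ := m₁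
  obtain ⟨z, hzX, hz⟩ := m₂
  obtain ⟨p⟩ := hX.preconnected ⟨y, hyX⟩ ⟨z, hzX⟩
  exact walk_reachable p hy hz _ _

end IsTreeDecomp

section branchBag

variable {ι : Type*} {B : W → Set V} {bag : ι → Set V}

lemma branchBag_finite (hdisj : Pairwise fun u w => Disjoint (B u) (B w)) {t : ι}
    (ht : (bag t).Finite) : (branchBag B bag t).Finite := by
  refine (ht.biUnion fun x _ => ?_).subset fun w ⟨x, hxB, hxt⟩ => Set.mem_biUnion hxt hxB
  exact Set.Subsingleton.finite fun u hu w hw =>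
    by_contra fun huw => Set.disjoint_left.mp (hdisj huw) hu hw

lemma branchBag_isClique {G : SimpleGraph V} {H : SimpleGraph W}
    (hdisj : Pairwise fun u w => Disjoint (B u) (B w))
    (hadj : ∀ u w, u ≠ w → (∃ x ∈ B u, ∃ y ∈ B w, G.Adj x y) → H.Adj u w) {t : ι}
    (ht : G.IsClique (bag t)) : H.IsClique (branchBag B bag t) := by
  rintro u ⟨x, hxB, hxt⟩ w ⟨y, hyB, hyt⟩ huw
  have hxy : x ≠ y := by
    rintro rfl
    exact Set.disjoint_left.mp (hdisj huw) hxB hyB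
  exact hadj u w huw ⟨x, hxB, y, hyB, ht hxt hyt hxy⟩

lemma isTreeDecomp_branchBag {G : SimpleGraph V} {H : SimpleGraph W} {T : SimpleGraph ι}
    (htd : IsTreeDecomp G T bag)
    (hconn : ∀ w, (G.induce (B w)).Connected)
    (hadj : ∀ u w, H.Adj u w → ∃ x ∈ B u, ∃ y ∈ B w, G.Adj x y) :
    IsTreeDecomp H T (branchBag B bag) := by
  refine ⟨htd.1, fun w => ?_, fun u w huw => ?_,
    fun w => htd.induce_setOf_inter_nonempty_connected (hconn w)⟩
  · obtain ⟨x, hx⟩ := (hconn w).nonempty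
    obtain ⟨t, ht⟩ := htd.2.1 x
    exact ⟨t, x, hx, ht⟩
  · obtain ⟨x, hx, y, hy, hxy⟩ := hadj u w huw
    obtain ⟨t, hxt, hyt⟩ := htd.2.2.1 x y hxy
    exact ⟨t, ⟨x, hx, hxt⟩, ⟨y, hy, hyt⟩⟩

end branchBag

theorem stmt11 {V : Type u} {W : Type*} {ι : Type v} (G : SimpleGraph V)
    (H : SimpleGraph W) (T : SimpleGraph ι) (bag : ι → Set V)
    (htd : IsTreeDecomp G T bag)
    (hfin : ∀ t, (bag t).Finite ∧ G.IsClique (bag t))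
    (hminor : IsInducedMinor H G) :
    ∃ (κ : Type v) (T' : SimpleGraph κ) (bag' : κ → Set W),
      IsTreeDecomp H T' bag' ∧ ∀ t, (bag' t).Finite ∧ H.IsClique (bag' t) := by
  obtain ⟨B, -, hconn, hdisj, hadj⟩ := hminor
  refine ⟨ι, T, branchBag B bag,
    isTreeDecomp_branchBag htd hconn fun u w huw => (hadj u w huw.ne).2 huw,
    fun t => ⟨branchBag_finite hdisj (hfin t).1, ?_⟩⟩
  exact branchBag_isClique hdisj (fun u w huw => (hadj u w huw).1) (hfin t).2
end

section
/- Let G be a graph in which, for every pair of non-adjacent vertices a, b, every minimal a–b separator is finite. Then for every pair of non-adjacent vertices a, b of G, the collection of all minimal a–b separators is finite. -/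
open SimpleGraph

variable {V W : Type*}

universe u

/-!
Take infinitely many distinct minimal `a`–`b` separators `Sᵢ` and let `L` be the set of vertices
lying in `Sᵢ` for `𝒰`-almost every `i`, for a free ultrafilter `𝒰`. Every walk has finite support,
so `L` separates `a` from `b`, and by Zorn's lemma it contains a minimal separator `m`. By
hypothesis `m` is finite, hence `m ⊆ Sᵢ` for almost every `i`, and minimality of `Sᵢ` forces
`Sᵢ = m` for infinitely many `i`: a contradiction.
-/

theorem Separates.sInter_of_isChain {G : SimpleGraph V} {A B : Set V} {c : Set (Set V)}
    (hc : IsChain (· ⊆ ·) c) (hne : c.Nonempty) (hsep : ∀ s ∈ c, Separates G A B s) :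
    Separates G A B (⋂₀ c) := by
  classical
  intro a ha b hb p
  by_contra! hmiss
  have hcover : {x | x ∈ p.support} ⊆ ⋃ s ∈ c, sᶜ := by
    intro x hx
    simpa using hmiss x hx
  have hdir : DirectedOn (fun s t : Set V => sᶜ ⊆ tᶜ) c := fun s hs t ht =>
    (hc.total hs ht).elim (fun h => ⟨s, hs, subset_rfl, Set.compl_subset_compl.mpr h⟩)
      fun h => ⟨t, ht, Set.compl_subset_compl.mpr h, subset_rfl⟩
  -- the walk avoids a single member of the chain, since its support is finite
  obtain ⟨s, hs, havoid⟩ := DirectedOn.exists_mem_subset_of_finset_subset_biUnion hne hdir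
    (s := p.support.toFinset) (by simpa using hcover)
  obtain ⟨x, hx, hxs⟩ := hsep s hs a ha b hb p
  exact havoid (by simpa using hx) hxs

theorem Separates.exists_isMinimalSeparator_subset {G : SimpleGraph V} {A B S : Set V}
    (h : Separates G A B S) : ∃ m ⊆ S, IsMinimalSeparator G A B m := by
  obtain ⟨m, hmS, ⟨-, hm⟩, hmin⟩ :=
    zorn_superset_nonempty {T | T ⊆ S ∧ Separates G A B T}
      (fun c hc hchain hne =>
        ⟨⋂₀ c,
          ⟨(Set.sInter_subset_of_mem hne.some_mem).trans (hc hne.some_mem).1,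
            Separates.sInter_of_isChain hchain hne fun s hs => (hc hs).2⟩,
          fun _ => Set.sInter_subset_of_mem⟩)
      S ⟨subset_rfl, h⟩
  exact ⟨m, hmS, hm, fun T hTm hT =>
    le_antisymm hTm (hmin ⟨hTm.trans hmS, hT⟩ hTm)⟩

theorem Separates.liminf {ι : Type*} {G : SimpleGraph V} {A B : Set V} {S : ι → Set V}
    (𝒰 : Ultrafilter ι) (hS : ∀ i, Separates G A B (S i)) :
    Separates G A B (Filter.liminf S 𝒰) := by
  intro a ha b hb p
  have hmeet : ∀ᶠ i in 𝒰, ∃ x ∈ {x | x ∈ p.support}, x ∈ S i :=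
    Filter.Eventually.of_forall fun i => hS i a ha b hb p
  obtain ⟨x, hx, hxS⟩ := (Ultrafilter.eventually_exists_mem_iff p.support.finite_toSet).mp hmeet
  exact ⟨x, hx, Filter.mem_liminf_iff_eventually_mem.mpr hxS⟩

theorem stmt15 {V : Type u} (G : SimpleGraph V)
    (hfin : ∀ a b : V, a ≠ b → ¬ G.Adj a b →
      ∀ S : Set V, IsMinimalVxSeparator G a b S → S.Finite) :
    ∀ a b : V, a ≠ b → ¬ G.Adj a b →
      {S : Set V | IsMinimalVxSeparator G a b S}.Finite := by
  intro a b hab hadj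
  by_contra hinf
  let f := Set.Infinite.natEmbedding _ hinf
  let S : ℕ → Set V := fun i => f i
  have hS : ∀ i, IsMinimalVxSeparator G a b (S i) := fun i => (f i).2
  let L := Filter.liminf S (Filter.hyperfilter ℕ)
  have hnotin : ∀ v, (∀ i, v ∉ S i) → v ∉ L := fun v hv hvL =>
    let ⟨i, hi⟩ := (Filter.mem_liminf_iff_eventually_mem.mp hvL).exists
    hv i hi
  obtain ⟨m, hmL, hm⟩ := (Separates.liminf _ fun i => (hS i).2.2.1).exists_isMinimalSeparator_subset
  have hmv : IsMinimalVxSeparator G a b m :=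
    ⟨fun h => hnotin a (fun i => (hS i).1) (hmL h),
      fun h => hnotin b (fun i => (hS i).2.1) (hmL h), hm⟩
  have hsub : ∀ᶠ i in Filter.hyperfilter ℕ, m ⊆ S i :=
    (Filter.eventually_all_finite (hfin a b hab hadj m hmv)).mpr fun _ hv =>
      Filter.mem_liminf_iff_eventually_mem.mp (hmL hv)
  have heq : ∀ᶠ i in Filter.hyperfilter ℕ, S i = m :=
    hsub.mono fun i hi => ((hS i).2.2.2 m hi hm.1).symm
  have hsingle : {i | S i = m}.Subsingleton := fun i hi j hj =>
    f.injective (Subtype.ext (hi.trans hj.symm))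
  exact Filter.notMem_hyperfilter_of_finite hsingle.finite heq
end

section
/- Let G be a chordal graph, S a clique separator of G, and let C_A, C_B be two distinct components of G − S each attached to S (i.e., S ⊆ N(C_A) and S ⊆ N(C_B)). If S is infinite, then G contains an induced minor isomorphic to 𝓗. -/
/-!
Branch sets: singletons `{v i}` for an injective sequence `v` in the infinite clique `S` model
the clique of `𝓗`, and the components `C_A`, `C_B` model its two dominating vertices. Every
vertex of `S` has a neighbour in both components, while two distinct components of `G - S` are
disjoint and send no edge to each other, so the two dominating vertices stay non-adjacent.
-/

open SimpleGraph

variable {V W : Type*}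

universe u

namespace IsCompOutside

variable {G : SimpleGraph V} {S C D : Set V}

lemma subset_of_mem (hC : IsCompOutside G S C) (hD : IsCompOutside G S D) {x : V}
    (hxC : x ∈ C) (hxD : x ∈ D) : C ⊆ D := by
  have walk_stays : ∀ {a b : C}, (G.induce C).Walk a b → (a : V) ∈ D → (b : V) ∈ D := by
    intro a b p
    induction p with
    | nil => exact id
    | cons h _ ih =>
      exact fun ha => ih (hD.2.2.2 _ ha _ h (Set.disjoint_left.mp hC.2.1 (Subtype.prop _)))
  intro u hu
  obtain ⟨p⟩ := hC.2.2.1.preconnected ⟨x, hxC⟩ ⟨u, hu⟩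
  exact walk_stays p hxD

lemma disjoint_of_ne (hC : IsCompOutside G S C) (hD : IsCompOutside G S D) (hne : C ≠ D) :
    Disjoint C D :=
  Set.disjoint_left.mpr fun _ hxC hxD =>
    hne ((hC.subset_of_mem hD hxC hxD).antisymm (hD.subset_of_mem hC hxD hxC))

lemma not_adj_of_ne (hC : IsCompOutside G S C) (hD : IsCompOutside G S D) (hne : C ≠ D)
    {x y : V} (hx : x ∈ C) (hy : y ∈ D) : ¬ G.Adj x y := fun hxy =>
  Set.disjoint_left.mp (hC.disjoint_of_ne hD hne)
    (hC.2.2.2 x hx y hxy (Set.disjoint_left.mp hD.2.1 hy)) hy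

end IsCompOutside

lemma isInducedMinor_HGraph_of_clique {G : SimpleGraph V} {f : ℕ → V}
    (hf : Function.Injective f) (hclique : ∀ i j, i ≠ j → G.Adj (f i) (f j))
    {A B : Set V} (hA : A.Nonempty) (hB : B.Nonempty)
    (hAconn : (G.induce A).Connected) (hBconn : (G.induce B).Connected)
    (hAB : Disjoint A B) (hnoAB : ∀ a ∈ A, ∀ b ∈ B, ¬ G.Adj a b)
    (hfA : ∀ i, f i ∈ nbhdSet G A) (hfB : ∀ i, f i ∈ nbhdSet G B) :
    IsInducedMinor HGraph G := by
  refine ⟨Sum.elim (fun i => {f i}) (fun b => cond b A B), ?_, ?_, ?_, ?_⟩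
  · rintro (i | _ | _)
    exacts [Set.singleton_nonempty _, hB, hA]
  · rintro (i | _ | _)
    exacts [by simp only [Sum.elim_inl, induce_singleton_eq_top, connected_top], hBconn, hAconn]
  · rintro (i | _ | _) (j | _ | _) hne <;>
      simp only [Sum.elim_inl, Sum.elim_inr, cond_true, cond_false, Set.disjoint_singleton_left,
        Set.disjoint_singleton_right, Set.mem_singleton_iff]
    all_goals first
      | exact fun h => hne (by rw [hf h])
      | exact (hfA _).1 | exact (hfB _).1 | exact hAB | exact hAB.symm | exact absurd rfl hne
  · rintro (i | _ | _) (j | _ | _) hne <;>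
      simp only [Sum.elim_inl, Sum.elim_inr, cond_true, cond_false, Set.mem_singleton_iff,
        exists_eq_left, HGraph]
    · have hij : i ≠ j := fun h => hne (congrArg _ h)
      exact iff_of_true (hclique i j hij) hij
    · obtain ⟨b, hb, hadj⟩ := (hfB i).2
      exact iff_true_intro ⟨b, hb, hadj.symm⟩
    · obtain ⟨a, ha, hadj⟩ := (hfA i).2
      exact iff_true_intro ⟨a, ha, hadj.symm⟩
    · exact iff_true_intro (hfB j).2
    · exact absurd rfl hne
    · exact iff_false_intro fun ⟨b, hb, a, ha, hadj⟩ => hnoAB a ha b hb hadj.symm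
    · exact iff_true_intro (hfA j).2
    · exact iff_false_intro fun ⟨a, ha, b, hb, hadj⟩ => hnoAB a ha b hb hadj
    · exact absurd rfl hne

theorem stmt18_general {V : Type u} (G : SimpleGraph V)
    (S : Set V) (hS : G.IsClique S)
    (CA CB : Set V) (hCA : IsCompOutside G S CA) (hCB : IsCompOutside G S CB)
    (hne : CA ≠ CB) (hattA : S ⊆ nbhdSet G CA) (hattB : S ⊆ nbhdSet G CB)
    (hinf : S.Infinite) :
    IsInducedMinor HGraph G := by
  let f : ℕ ↪ S := hinf.natEmbedding
  have hf : Function.Injective fun i => (f i : V) := Subtype.val_injective.comp f.injective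
  have hfS (i : ℕ) : (f i : V) ∈ S := (f i).2
  exact isInducedMinor_HGraph_of_clique hf (fun i j hij => hS (hfS i) (hfS j) (hf.ne hij))
    hCA.1 hCB.1 hCA.2.2.1 hCB.2.2.1 (hCA.disjoint_of_ne hCB hne)
    (fun a ha b hb => hCA.not_adj_of_ne hCB hne ha hb)
    (fun i => hattA (hfS i)) (fun i => hattB (hfS i))

theorem stmt18 {V : Type u} (G : SimpleGraph V) (hchordal : IsChordal G)
    (S : Set V) (hS : G.IsClique S)
    (CA CB : Set V) (hCA : IsCompOutside G S CA) (hCB : IsCompOutside G S CB)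
    (hne : CA ≠ CB) (hattA : S ⊆ nbhdSet G CA) (hattB : S ⊆ nbhdSet G CB)
    (hinf : S.Infinite) :
    IsInducedMinor HGraph G :=
  stmt18_general G S hS CA CB hCA hCB hne hattA hattB hinf
end
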